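/- arXiv:2205.01284 — 5 statements merged into one kernel-verified Lean document; each statement's English description precedes it below -/
import Mathlib

section
/- Let m ≥ 1, let rdx : ZMod m, let S : ZMod m → Bool be the weight-1 bit vector over rdx, and suppose S is Boolean secret-shared as S_s, S_r : ZMod m → Bool with S i = xor (S_s i) (S_r i) for all i. Let C : ZMod m → BitVec ℓ. Then for every idx : ZMod m, setting δ = rdx − idx in ZMod m, the two locally computable shares e_s = XOR over i of (if S_s (δ + i) then C i else 0) and e_r = XOR over i of (if S_r (δ + i) then C i else 0) satisfy e_s ^^^ e_r = C idx. -/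
instance (ℓ : ℕ) : Std.Commutative (α := BitVec ℓ) (· ^^^ ·) := ⟨BitVec.xor_comm⟩
instance (ℓ : ℕ) : Std.Associative (α := BitVec ℓ) (· ^^^ ·) := ⟨BitVec.xor_assoc⟩

/-- XOR of the values of `f` over all elements of a finite index type. -/
def xorSum {ι : Type*} [Fintype ι] {ℓ : ℕ} (f : ι → BitVec ℓ) : BitVec ℓ :=
  Finset.univ.fold (· ^^^ ·) 0 f

lemma fold_single {ι : Type*} [DecidableEq ι] {ℓ : ℕ} (s : Finset ι) (a : ι) (v : BitVec ℓ) :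
    s.fold (fun x y : BitVec ℓ => x ^^^ y) 0 (fun i => if i = a then v else 0)
      = if a ∈ s then v else 0 := by
  induction s using Finset.induction_on with
  | empty => simp
  | @insert b s' hbs ih =>
      rw [Finset.fold_insert hbs, ih]
      by_cases hb : b = a
      · subst hb
        simp [hbs, BitVec.xor_zero]
      · by_cases ha : a ∈ s' <;>
          simp [Finset.mem_insert, hb, Ne.symm hb, ha, BitVec.zero_xor, BitVec.xor_zero]

/-- Shared derandomized oblivious selection: if the weight-1 bit vector `S` over `rdx`
is Boolean secret-shared as `S_s, S_r`, then for `δ = rdx - idx` the two locally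
computable shares `e_s` and `e_r` XOR to `C idx`. -/
theorem shared_wbv_select_correct {m ℓ : ℕ} [NeZero m] (rdx : ZMod m) (S : ZMod m → Bool)
    (hS : S rdx = true) (hS' : ∀ j : ZMod m, j ≠ rdx → S j = false)
    (S_s S_r : ZMod m → Bool) (hshare : ∀ i : ZMod m, S i = xor (S_s i) (S_r i))
    (C : ZMod m → BitVec ℓ) (idx : ZMod m) :
    (xorSum (fun i : ZMod m => if S_s (rdx - idx + i) then C i else 0)) ^^^
      (xorSum (fun i : ZMod m => if S_r (rdx - idx + i) then C i else 0)) = C idx := by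
  unfold xorSum
  rw [← Finset.fold_op_distrib (op := fun x y : BitVec ℓ => x ^^^ y)]
  have key : ∀ i : ZMod m,
      ((if S_s (rdx - idx + i) then C i else 0) ^^^ (if S_r (rdx - idx + i) then C i else 0))
        = if i = idx then C idx else 0 := by
    intro i
    have hs := hshare (rdx - idx + i)
    by_cases hi : i = idx
    · subst hi
      have hx : rdx - i + i = rdx := by ring
      rw [hx] at hs ⊢
      rw [hS] at hs
      cases hss : S_s rdx <;> cases hrr : S_r rdx <;> rw [hss, hrr] at hs
      · simp at hs
      · simp [BitVec.zero_xor]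
      · simp [BitVec.xor_zero]
      · simp at hs
    · have hne : rdx - idx + i ≠ rdx := by
        intro h
        exact hi (by linear_combination h)
      rw [hS' _ hne] at hs
      cases hss : S_s (rdx - idx + i) <;> cases hrr : S_r (rdx - idx + i) <;>
          rw [hss, hrr] at hs
      · simp [hi, BitVec.xor_zero]
      · simp at hs
      · simp at hs
      · simp [hi, BitVec.xor_self]
  rw [Finset.fold_congr (fun i _ => key i)]
  have := fold_single (Finset.univ : Finset (ZMod m)) idx (C idx)
  simp only [Finset.mem_univ, if_true] at this
  rw [show ((0:BitVec ℓ) ^^^ 0) = 0 from by simp, this]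
end

section
/- End-to-end correctness of the PRF-based SOS Select (per block): let m ≥ 1, let M : ZMod m → Fin B → BitVec ℓb be the array split into B blocks per element, let F : ℕ → BitVec ℓb be any function (the PRF under the sender's fixed key), let t be a natural with B ≤ 2^t, and define the encrypted array C by C i j = M i j ^^^ F (i.val · 2^t + j.val). Let rdx : ZMod m, let S : ZMod m → Bool be the weight-1 bit vector over rdx, let idx : ZMod m, and set δ = rdx − idx in ZMod m. Then for every block j : Fin B, (XOR over all i : ZMod m of (if S (δ + i) then C i j else 0)) ^^^ F (idx.val · 2^t + j.val) = M idx j. -/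
/-!
Since `S` is the weight-1 vector over `rdx`, the shifted vector `i ↦ S (rdx - idx + i)` is the
weight-1 vector over `idx`; the XOR therefore picks out exactly `C idx j`, and XORing with
`F (idx.val * 2 ^ t + j.val)` cancels its mask.
-/

namespace Finset

variable {α β : Type*} {op : β → β → β} [Std.Commutative op] [Std.Associative op] {b : β}

theorem fold_const_self (hb : op b b = b) (s : Finset α) : s.fold op b (fun _ => b) = b := by
  classical
  rw [fold_const b (by rw [hb, hb])]
  split_ifs <;> simp [hb]

theorem fold_ite_eq_of_mem [DecidableEq α] (hb : ∀ x, op x b = x) {s : Finset α} {a : α}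
    (ha : a ∈ s) (v : β) : s.fold op b (fun i => if i = a then v else b) = v := by
  rw [← insert_erase ha, fold_insert (notMem_erase a s), if_pos rfl,
    fold_congr (g := fun _ => b) fun i hi => if_neg (ne_of_mem_erase hi),
    fold_const_self (hb b), hb]

end Finset

theorem xorSum_ite_eq {ι : Type*} [Fintype ι] [DecidableEq ι] {ℓ : ℕ} (a : ι) (v : BitVec ℓ) :
    xorSum (fun i => if i = a then v else 0) = v :=
  Finset.fold_ite_eq_of_mem (fun _ => BitVec.xor_zero) (Finset.mem_univ a) v

theorem sub_add_eq_self_iff {G : Type*} [AddCommGroup G] {a b c : G} : a - b + c = a ↔ c = b := by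
  rw [sub_add_eq_add_sub, sub_eq_iff_eq_add, add_right_inj]

theorem prf_sos_select_correct_general {m B ℓb : ℕ} [NeZero m]
    (M : ZMod m → Fin B → BitVec ℓb) (F : ℕ → BitVec ℓb) (t : ℕ)
    (C : ZMod m → Fin B → BitVec ℓb)
    (hC : ∀ (i : ZMod m) (j : Fin B), C i j = M i j ^^^ F (i.val * 2 ^ t + j.val))
    (rdx : ZMod m) (S : ZMod m → Bool)
    (hS : S rdx = true) (hS' : ∀ j : ZMod m, j ≠ rdx → S j = false)
    (idx : ZMod m) (j : Fin B) :
    (xorSum (fun i : ZMod m => if S (rdx - idx + i) then C i j else 0)) ^^^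
      F (idx.val * 2 ^ t + j.val) = M idx j := by
  have hselect : (fun i => if S (rdx - idx + i) then C i j else 0)
      = fun i => if i = idx then C idx j else 0 := by
    funext i
    by_cases hi : i = idx
    · simp [hi, hS]
    · simp [hi, hS' _ (sub_add_eq_self_iff.not.mpr hi)]
  rw [hselect, xorSum_ite_eq, hC, BitVec.xor_assoc, BitVec.xor_self, BitVec.xor_zero]

/-- End-to-end per-block correctness of the PRF-based SOS Select: selecting from the
encrypted array `C i j = M i j ^^^ F (i * 2^t + j)` with a weight-1 bit vector over `rdx`
and revealed offset `δ = rdx - idx`, then unmasking with the shared PRF value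
`F (idx * 2^t + j)`, recovers block `j` of `M idx`. -/
theorem prf_sos_select_correct {m B ℓb : ℕ} [NeZero m]
    (M : ZMod m → Fin B → BitVec ℓb) (F : ℕ → BitVec ℓb) (t : ℕ) (hB : B ≤ 2 ^ t)
    (C : ZMod m → Fin B → BitVec ℓb)
    (hC : ∀ (i : ZMod m) (j : Fin B), C i j = M i j ^^^ F (i.val * 2 ^ t + j.val))
    (rdx : ZMod m) (S : ZMod m → Bool)
    (hS : S rdx = true) (hS' : ∀ j : ZMod m, j ≠ rdx → S j = false)
    (idx : ZMod m) (j : Fin B) :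
    (xorSum (fun i : ZMod m => if S (rdx - idx + i) then C i j else 0)) ^^^
      F (idx.val * 2 ^ t + j.val) = M idx j :=
  prf_sos_select_correct_general M F t C hC rdx S hS hS' idx j
end

section
/- Correctness of the additive-to-multiplicative share conversion: let R be a commutative ring (in the protocol, R = ZMod (N²)), let x, x_s, x_r : R with x = x_s + x_r, let γ : R be a unit with inverse γ', and let a, b, c_s, c_r : R with c_s + c_r = a · b. Define e = γ' − a and f = x_r − b. Then the multiplicative shares m_s = γ and m_r = x_s · γ' + (a · f + c_s) + (e · f + b · e + c_r) satisfy m_s · m_r = x. -/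
/-- Correctness of additive-to-multiplicative share conversion: given an additive sharing
`x = x_s + x_r`, a unit `γ` with inverse `γ'`, and a special Beaver triple
`c_s + c_r = a * b`, with revealed `e = γ' - a` and `f = x_r - b`, the shares
`m_s = γ` and `m_r = x_s * γ' + (a*f + c_s) + (e*f + b*e + c_r)` satisfy `m_s * m_r = x`. -/
theorem add_to_mult_share_conversion {R : Type*} [CommRing R]
    (x x_s x_r : R) (hx : x = x_s + x_r)
    (γ γ' : R) (hγ : γ * γ' = 1)
    (a b c_s c_r : R) (hc : c_s + c_r = a * b) :
    γ * (x_s * γ' + (a * (x_r - b) + c_s) + ((γ' - a) * (x_r - b) + b * (γ' - a) + c_r))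
      = x := by
  subst hx
  linear_combination (x_s + x_r) * hγ + γ * hc
end

section
/- Correctness of the randomized shared decryption: let ℓv, N, m₀, β, ρ be naturals with m₀ < 2^ℓv, β < 2^ℓv, and m₀ + β + ρ · 2^ℓv < N. Then (a) ((m₀ + β + ρ · 2^ℓv) mod N) mod 2^ℓv = (m₀ + β) mod 2^ℓv; and (b) in ZMod (2^ℓv), the two shares ((m₀ + β + ρ · 2^ℓv) mod N : ZMod (2^ℓv)) and (−β : ZMod (2^ℓv)) sum to (m₀ : ZMod (2^ℓv)), which has canonical representative m₀ since m₀ < 2^ℓv. -/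
/-- Correctness of the randomized shared decryption in the HE-based SOS protocol:
if `m₀, β < 2^ℓv` and `m₀ + β + ρ * 2^ℓv < N`, then (a) reducing the decryption
result modulo `2^ℓv` yields `(m₀ + β) mod 2^ℓv`, and (b) the shares
`(m₀ + β + ρ·2^ℓv) mod N` and `-β` sum to `m₀` in `ZMod (2^ℓv)`, whose canonical
representative is `m₀`. -/
theorem shared_decryption_correct (ℓv N m₀ β ρ : ℕ)
    (hm : m₀ < 2 ^ ℓv) (hβ : β < 2 ^ ℓv) (hN : m₀ + β + ρ * 2 ^ ℓv < N) :
    ((m₀ + β + ρ * 2 ^ ℓv) % N) % 2 ^ ℓv = (m₀ + β) % 2 ^ ℓv ∧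
    ((((m₀ + β + ρ * 2 ^ ℓv) % N : ℕ) : ZMod (2 ^ ℓv)) + (-(β : ZMod (2 ^ ℓv)))
        = (m₀ : ZMod (2 ^ ℓv))) ∧
    (m₀ : ZMod (2 ^ ℓv)).val = m₀ := by
  have h1 : (m₀ + β + ρ * 2 ^ ℓv) % N = m₀ + β + ρ * 2 ^ ℓv := Nat.mod_eq_of_lt hN
  refine ⟨?_, ?_, ?_⟩
  · rw [h1, Nat.add_mul_mod_self_right]
  · rw [h1]
    push_cast
    ring_nf
    rw [show ((2:ZMod (2^ℓv)))^ℓv = ((2^ℓv : ℕ) : ZMod (2^ℓv)) by push_cast; ring, ZMod.natCast_self, mul_zero, add_zero]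
  · exact ZMod.val_natCast_of_lt hm
end

section
/- Correctness of array-encoded decision tree evaluation with self-looping leaves: let DTree be the inductive type of binary decision trees with constructors leaf (c : ℕ) and node (v t : ℕ) (L R : DTree); define eval X (leaf c) = c and eval X (node v t L R) = if X v > t then eval X R else eval X L for a feature vector X : ℕ → ℕ; define depth (leaf c) = 0 and depth (node v t L R) = 1 + max (depth L) (depth R). Let A : Fin m → ℕ × Fin m × Fin m × ℕ × ℕ assign to each index a tuple (thr, l, r, v, c), define the evaluation step step : Fin m → Fin m by step i = if X (A i).v > (A i).thr then (A i).r else (A i).l, and define the encoding predicate Encodes A i T recursively by: Encodes A i (leaf c) iff (A i).l = i, (A i).r = i, and (A i).c = c; and Encodes A i (node v t L R) iff (A i).v = v, (A i).thr = t, Encodes A ((A i).l) L, and Encodes A ((A i).r) R. Then for every tree T, index i with Encodes A i T, and every d ≥ depth T, the label (A (step^[d] i)).c equals eval X T. -/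
/-- Binary decision trees: a leaf carries a classification label `c`; an internal node
carries a feature index `v`, a threshold `t`, and two subtrees. -/
inductive DTree : Type
  | leaf (c : ℕ) : DTree
  | node (v t : ℕ) (L R : DTree) : DTree

/-- Evaluation of a decision tree on a feature vector `X`. -/
def DTree.eval (X : ℕ → ℕ) : DTree → ℕ
  | .leaf c => c
  | .node v t L R => if X v > t then (DTree.eval X R) else (DTree.eval X L)

/-- Depth of a decision tree. -/
def DTree.depth : DTree → ℕ
  | .leaf _ => 0
  | .node _ _ L R => 1 + max L.depth R.depth

/-- An array node: threshold, left child index, right child index, feature index, label. -/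
structure ANode (m : ℕ) where
  thr : ℕ
  l : Fin m
  r : Fin m
  v : ℕ
  c : ℕ

/-- One evaluation step on the array encoding: compare `X[v]` against the threshold and
move to the right child if `X[v] > thr`, else to the left child. -/
def step {m : ℕ} (X : ℕ → ℕ) (A : Fin m → ANode m) (i : Fin m) : Fin m :=
  if X (A i).v > (A i).thr then (A i).r else (A i).l

/-- `Encodes A i T`: the array `A`, starting at index `i`, encodes the tree `T`; leaves
are encoded with a self-loop. -/
def Encodes {m : ℕ} (A : Fin m → ANode m) : Fin m → DTree → Prop
  | i, .leaf c => (A i).l = i ∧ (A i).r = i ∧ (A i).c = c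
  | i, .node v t L R =>
      (A i).v = v ∧ (A i).thr = t ∧ Encodes A ((A i).l) L ∧ Encodes A ((A i).r) R

/-- Correctness of array-encoded decision tree evaluation with self-looping leaves:
iterating the evaluation step any number `d ≥ depth T` of times from an index encoding
`T` ends at a node whose label is `eval X T`. -/
theorem array_tree_eval_correct {m : ℕ} (X : ℕ → ℕ) (A : Fin m → ANode m)
    (T : DTree) (i : Fin m) (hEnc : Encodes A i T) (d : ℕ) (hd : T.depth ≤ d) :
    (A ((step X A)^[d] i)).c = T.eval X := by
  induction T generalizing i d with
  | leaf c =>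
    obtain ⟨hl, hr, hc⟩ := hEnc
    have hfix : step X A i = i := by
      unfold step; split <;> assumption
    have : (step X A)^[d] i = i := Function.iterate_fixed hfix d
    rw [this]; exact hc
  | node v t L R ihL ihR =>
    obtain ⟨hv, ht, hL, hR⟩ := hEnc
    obtain ⟨d', rfl⟩ : ∃ d', d = d' + 1 := by
      cases d with
      | zero => simp [DTree.depth] at hd
      | succ n => exact ⟨n, rfl⟩
    rw [Function.iterate_succ_apply]
    have hdepth : 1 + max L.depth R.depth ≤ d' + 1 := hd
    have hL' : L.depth ≤ d' := by omega
    have hR' : R.depth ≤ d' := by omega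
    unfold step
    rw [hv, ht, DTree.eval]
    split
    · exact ihR _ hR d' hR'
    · exact ihL _ hL d' hL'
end
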